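/- Let U, V ⊆ ℝ² be transverse sets and let μ > 0. Then the family (x, y) ↦ exp(−μ(‖x−y‖ + d(x,∂U) + d(y,∂U) + d(x,∂V) + d(y,∂V))) is summable over ℤ² × ℤ². -/

import Mathlib

open Metric Set

noncomputable section

/-- The canonical embedding of `ℤ²` into the Euclidean plane. -/
def emb (p : ℤ × ℤ) : EuclideanSpace ℝ (Fin 2) :=
  (WithLp.equiv 2 (Fin 2 → ℝ)).symm ![(p.1 : ℝ), (p.2 : ℝ)]

/-- Two subsets of the plane are transverse if `Ψ_{U,V}(x) = 1 + d(x,∂U) + d(x,∂V)`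
grows at least like a positive power of `‖x‖`. -/
def Transverse (U V : Set (EuclideanSpace ℝ (Fin 2))) : Prop :=
  ∃ c : ℝ, 0 < c ∧ ∃ ρ : ℝ, 0 < ρ ∧ ∀ x : EuclideanSpace ℝ (Fin 2), ρ ≤ ‖x‖ →
    ‖x‖ ^ c ≤ 1 + infDist x (frontier U) + infDist x (frontier V)

lemma summable_exp_neg_rpow_nat {ν c : ℝ} (hν : 0 < ν) (hc : 0 < c) :
    Summable (fun n : ℕ => Real.exp (-(ν * (n : ℝ) ^ c))) := by
  set k : ℕ := ⌈2 / c⌉₊ + 1 with hkdef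
  have hk2 : 2 ≤ c * k := by
    have h1 : 2 / c ≤ (k : ℝ) := le_trans (Nat.le_ceil _) (by exact_mod_cast Nat.le_succ _)
    have := mul_le_mul_of_nonneg_left h1 hc.le
    rwa [mul_div_cancel₀ _ hc.ne'] at this
  set C : ℝ := (k.factorial : ℝ) / ν ^ k with hCdef
  have hC : 0 < C := by positivity
  apply (summable_nat_add_iff 1).mp
  have hmaj : Summable (fun n : ℕ => C * ((n : ℝ) + 1) ^ (-(2:ℝ))) := by
    have h0 : Summable (fun n : ℕ => ((n : ℝ)) ^ (-(2:ℝ))) :=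
      Real.summable_nat_rpow.mpr (by norm_num)
    have h1 := (summable_nat_add_iff 1).mpr h0
    exact (h1.congr (fun n => by push_cast; ring_nf)).mul_left C
  apply Summable.of_nonneg_of_le (fun n => (Real.exp_pos _).le) _ hmaj
  intro n
  set x : ℝ := ((n + 1 : ℕ) : ℝ) with hxdef
  have hxeq : x = (n : ℝ) + 1 := by rw [hxdef]; push_cast; ring
  have hx1 : (1:ℝ) ≤ x := by rw [hxeq]; linarith [Nat.cast_nonneg (α := ℝ) n]
  have hx0 : (0:ℝ) < x := lt_of_lt_of_le one_pos hx1
  have hxc : 0 < x ^ c := Real.rpow_pos_of_pos hx0 c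
  have ht : 0 < ν * x ^ c := mul_pos hν hxc
  have h1 : (ν * x ^ c) ^ k / k.factorial ≤ Real.exp (ν * x ^ c) := by
    refine le_trans ?_ (Real.sum_le_exp_of_nonneg ht.le (k + 1))
    exact Finset.single_le_sum
      (f := fun i => (ν * x ^ c) ^ i / i.factorial)
      (fun i _ => div_nonneg (pow_nonneg ht.le i) (by positivity))
      (Finset.self_mem_range_succ k)
  have h2 : Real.exp (-(ν * x ^ c)) ≤ (k.factorial : ℝ) / (ν * x ^ c) ^ k := by
    calc Real.exp (-(ν * x ^ c)) = (Real.exp (ν * x ^ c))⁻¹ := Real.exp_neg _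
      _ ≤ ((ν * x ^ c) ^ k / k.factorial)⁻¹ := by
          apply inv_anti₀ (by positivity) h1
      _ = (k.factorial : ℝ) / (ν * x ^ c) ^ k := by rw [inv_div]
  have hxck : x ^ (c * (k:ℕ)) = (x ^ c) ^ (k:ℕ) := by
    rw [Real.rpow_mul hx0.le, Real.rpow_natCast]
  have h5 : x ^ (2:ℝ) ≤ (x ^ c) ^ (k:ℕ) := by
    rw [← hxck]; exact Real.rpow_le_rpow_of_exponent_le hx1 hk2
  have hx2 : (0:ℝ) < x ^ (2:ℝ) := Real.rpow_pos_of_pos hx0 _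
  have h6 : (k.factorial : ℝ) / (ν * x ^ c) ^ k ≤ C * x ^ (-(2:ℝ)) := by
    rw [mul_pow, Real.rpow_neg hx0.le]
    have heq : (k.factorial : ℝ) / (ν ^ k * (x ^ c) ^ k) = C * ((x ^ c) ^ k)⁻¹ := by
      rw [hCdef]; field_simp
    rw [heq]
    exact mul_le_mul_of_nonneg_left (inv_anti₀ hx2 h5) hC.le
  rw [← hxeq]
  exact le_trans h2 h6

lemma summable_exp_neg_rpow_int {ν c : ℝ} (hν : 0 < ν) (hc : 0 < c) :
    Summable (fun n : ℤ => Real.exp (-(ν * |(n : ℝ)| ^ c))) := by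
  apply Summable.of_nat_of_neg
  · exact (summable_exp_neg_rpow_nat hν hc).congr fun n => by
      rw [Int.cast_natCast, abs_of_nonneg (Nat.cast_nonneg n)]
  · exact (summable_exp_neg_rpow_nat hν hc).congr fun n => by
      push_cast
      rw [abs_neg, abs_of_nonneg (Nat.cast_nonneg n)]

lemma abs_coord_le_norm_emb (p : ℤ × ℤ) :
    |(p.1 : ℝ)| ≤ ‖emb p‖ ∧ |(p.2 : ℝ)| ≤ ‖emb p‖ := by
  have hnorm : ‖emb p‖ = Real.sqrt ((p.1 : ℝ) ^ 2 + (p.2 : ℝ) ^ 2) := by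
    simp [emb, EuclideanSpace.norm_eq, Fin.sum_univ_two, Real.norm_eq_abs, sq_abs]
  constructor
  · rw [hnorm, ← Real.sqrt_sq_eq_abs]
    exact Real.sqrt_le_sqrt (by nlinarith [sq_nonneg ((p.2 : ℝ))])
  · rw [hnorm, ← Real.sqrt_sq_eq_abs]
    exact Real.sqrt_le_sqrt (by nlinarith [sq_nonneg ((p.1 : ℝ))])

theorem summable_transverse_kernel (U V : Set (EuclideanSpace ℝ (Fin 2)))
    (hUV : Transverse U V) (μ : ℝ) (hμ : 0 < μ) :
    Summable (fun p : (ℤ × ℤ) × (ℤ × ℤ) =>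
      Real.exp (-μ * (‖emb p.1 - emb p.2‖
        + infDist (emb p.1) (frontier U) + infDist (emb p.2) (frontier U)
        + infDist (emb p.1) (frontier V) + infDist (emb p.2) (frontier V)))) := by
  obtain ⟨c₀, hc₀, ρ₀, hρ₀, htr⟩ := hUV
  set c : ℝ := min c₀ 1 with hcdef
  have hc : 0 < c := lt_min hc₀ one_pos
  have hcc₀ : c ≤ c₀ := min_le_left _ _
  set ρ : ℝ := max ρ₀ 1 with hρdef
  have hρ1 : (1:ℝ) ≤ ρ := le_max_right _ _
  set K : ℝ := 1 + ρ ^ c with hKdef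
  have hρc : (0:ℝ) ≤ ρ ^ c := Real.rpow_nonneg (by linarith) c
  -- lower bound for the sum of distances
  have hDK : ∀ x : EuclideanSpace ℝ (Fin 2),
      ‖x‖ ^ c - K ≤ infDist x (frontier U) + infDist x (frontier V) := by
    intro x
    rcases le_or_gt ρ ‖x‖ with hx | hx
    · have h1x : (1:ℝ) ≤ ‖x‖ := le_trans hρ1 hx
      have h0 := htr x (le_trans (le_max_left _ _) hx)
      have h2 : ‖x‖ ^ c ≤ ‖x‖ ^ c₀ := Real.rpow_le_rpow_of_exponent_le h1x hcc₀
      linarith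
    · have h1 : ‖x‖ ^ c ≤ ρ ^ c := Real.rpow_le_rpow (norm_nonneg x) hx.le hc.le
      have h2 : 0 ≤ infDist x (frontier U) := infDist_nonneg
      have h3 : 0 ≤ infDist x (frontier V) := infDist_nonneg
      linarith
  have hemb : ∀ p : ℤ × ℤ, |(p.1 : ℝ)| ^ c + |(p.2 : ℝ)| ^ c ≤ 2 * ‖emb p‖ ^ c := by
    intro p
    obtain ⟨h1, h2⟩ := abs_coord_le_norm_emb p
    have h3 : |(p.1 : ℝ)| ^ c ≤ ‖emb p‖ ^ c := Real.rpow_le_rpow (abs_nonneg _) h1 hc.le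
    have h4 : |(p.2 : ℝ)| ^ c ≤ ‖emb p‖ ^ c := Real.rpow_le_rpow (abs_nonneg _) h2 hc.le
    linarith
  -- majorant
  set g : ℤ → ℝ := fun n => Real.exp (-(μ / 2 * |(n : ℝ)| ^ c)) with hgdef
  have hg : Summable g := summable_exp_neg_rpow_int (half_pos hμ) hc
  have hgpos : ∀ n, 0 ≤ g n := fun n => (Real.exp_pos _).le
  set F : ℤ × ℤ → ℝ := fun p => Real.exp (μ * K) * (g p.1 * g p.2) with hFdef
  have hF : Summable F := ((hg.mul_of_nonneg hg hgpos hgpos).mul_left _)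
  have hFpos : ∀ p, 0 ≤ F p :=
    fun p => mul_nonneg (Real.exp_pos _).le (mul_nonneg (hgpos _) (hgpos _))
  have hFF : Summable (fun q : (ℤ × ℤ) × (ℤ × ℤ) => F q.1 * F q.2) :=
    hF.mul_of_nonneg hF hFpos hFpos
  apply Summable.of_nonneg_of_le (fun q => (Real.exp_pos _).le) _ hFF
  intro q
  have hFexp : F q.1 * F q.2 = Real.exp
      ((μ * K - μ / 2 * |(q.1.1 : ℝ)| ^ c - μ / 2 * |(q.1.2 : ℝ)| ^ c)
       + (μ * K - μ / 2 * |(q.2.1 : ℝ)| ^ c - μ / 2 * |(q.2.2 : ℝ)| ^ c)) := by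
    rw [hFdef]
    simp only [hgdef]
    rw [← Real.exp_add, ← Real.exp_add, ← Real.exp_add, ← Real.exp_add, ← Real.exp_add]
    congr 1
    ring
  rw [hFexp, Real.exp_le_exp]
  have hD1 := hDK (emb q.1)
  have hD2 := hDK (emb q.2)
  have he1 := hemb q.1
  have he2 := hemb q.2
  have hN : 0 ≤ ‖emb q.1 - emb q.2‖ := norm_nonneg _
  nlinarith [mul_le_mul_of_nonneg_left hD1 hμ.le, mul_le_mul_of_nonneg_left hD2 hμ.le,
    mul_le_mul_of_nonneg_left he1 (by linarith : (0:ℝ) ≤ μ / 2),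
    mul_le_mul_of_nonneg_left he2 (by linarith : (0:ℝ) ≤ μ / 2),
    mul_nonneg hμ.le hN]
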